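/- arXiv:1906.03811 — 2 statements merged into one kernel-verified Lean document; each statement's English description precedes it below -/
import Mathlib

section
/- The characteristic polynomial of the block matrix [[A - (g/ḡ)BC, (g/ḡ)BC], [-BC, A + BC]] equals p_a(s)·p_b(s), where p_a(s) = det(sI - A) and p_b(s) = det(sI - A + ((g - ḡ)/ḡ)BC). -/
/-!
Conjugating by the block matrix `[[1, 0], [1, 1]]` turns `[[A, k • BC], [0, A - (k - 1) • BC]]`
with `k = g / ḡ` into the given block matrix, and the characteristic polynomial of a
block upper triangular matrix is the product of those of its diagonal blocks.
-/

open Matrix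

namespace Matrix

variable {R ι : Type*} [CommRing R] [Fintype ι] [DecidableEq ι]

theorem charpoly_fromBlocks_sub_sub (A E F : Matrix ι ι R) :
    (fromBlocks (A - E) E (A - E - F) (E + F)).charpoly = A.charpoly * F.charpoly := by
  have hinv : fromBlocks 1 0 (-1) 1 * fromBlocks 1 0 1 1 = (1 : Matrix (ι ⊕ ι) (ι ⊕ ι) R) := by
    simp [fromBlocks_multiply, ← fromBlocks_one]
  have hconj : fromBlocks (A - E) E (A - E - F) (E + F)
      = fromBlocks 1 0 1 1 * (fromBlocks A E 0 F * fromBlocks 1 0 (-1) 1) := by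
    simp only [fromBlocks_multiply, Matrix.one_mul, Matrix.mul_one, Matrix.zero_mul,
      Matrix.mul_zero, Matrix.mul_neg, add_zero, zero_add]
    congr 1 <;> abel
  rw [hconj, charpoly_mul_comm, Matrix.mul_assoc, hinv, Matrix.mul_one,
    charpoly_fromBlocks_zero₂₁]

end Matrix

theorem block_charpoly_factorization_general {n : ℕ}
    (A : Matrix (Fin n) (Fin n) ℝ) (B : Matrix (Fin n) (Fin 1) ℝ)
    (C : Matrix (Fin 1) (Fin n) ℝ) (g gbar : ℝ) (hgbar : gbar ≠ 0) :
    (Matrix.fromBlocks (A - (g / gbar) • (B * C)) ((g / gbar) • (B * C))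
        (-(B * C)) (A + B * C)).charpoly
      = A.charpoly * (A - ((g - gbar) / gbar) • (B * C)).charpoly := by
  have hk : (g - gbar) / gbar = g / gbar - 1 := by field_simp
  rw [hk, ← charpoly_fromBlocks_sub_sub]
  congr 2 <;> module

theorem block_charpoly_factorization {n : ℕ}
    (A : Matrix (Fin n) (Fin n) ℝ) (B : Matrix (Fin n) (Fin 1) ℝ)
    (C : Matrix (Fin 1) (Fin n) ℝ) (g gbar : ℝ) (hg : g ≠ 0) (hgbar : gbar ≠ 0) :
    (Matrix.fromBlocks (A - (g / gbar) • (B * C)) ((g / gbar) • (B * C))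
        (-(B * C)) (A + B * C)).charpoly
      = A.charpoly * (A - ((g - gbar) / gbar) • (B * C)).charpoly :=
  block_charpoly_factorization_general A B C g gbar hgbar
end

section
/- For the singularly perturbed linear system τξ̇ = Aξ + BC(ζ - ξ)·(g/ḡ) + (boundary terms), if the fast subsystem matrix is Hurwitz and the slow subsystem is exponentially stable, then there exists τ* > 0 such that for all 0 < τ < τ*, the combined linear system ẋ = A₁₁x + A₁₂ξ, τξ̇ = A₂₁x + A₂₂ξ is exponentially stable, where A₂₂ is Hurwitz and A₁₁ - A₁₂A₂₂⁻¹A₂₁ is Hurwitz. -/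
/-! For `Re z ≥ 0` and `μ = τ z`, the Schur complement of the fast block in `z - M_τ` is
`z - A₀ - μ A₁₂ (μ - A₂₂)⁻¹ A₂₂⁻¹ A₂₁` by the resolvent identity. Both resolvents of the Hurwitz
matrices `A₂₂` and `A₀` stay bounded on the closed right half-plane, the second even after
multiplication by `z` (it decays like `1 / z`), so the correction term is `O(τ)` relative to
`z - A₀` and cannot make it singular once `τ` is small. -/

open Matrix

def IsHurwitz {n : Type*} [Fintype n] [DecidableEq n] (M : Matrix n n ℝ) : Prop :=
  ∀ z ∈ spectrum ℂ (M.map (Complex.ofReal)), z.re < 0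

open Filter Asymptotics Bornology

theorem resolvent_add_ringInverse {R A : Type*} [CommRing R] [Ring A] [Algebra R A] {a : A}
    {r : R} (ha : IsUnit a) (hr : r ∈ resolventSet R a) :
    resolvent a r + Ring.inverse a = r • (resolvent a r * Ring.inverse a) := by
  have hr' : resolvent a r * (algebraMap R A r - a) = 1 := Ring.inverse_mul_cancel _ hr
  calc resolvent a r + Ring.inverse a
      = resolvent a r * (algebraMap R A r - a) * Ring.inverse a
        + resolvent a r * (a * Ring.inverse a) := by
        rw [hr', one_mul, Ring.mul_inverse_cancel _ ha, mul_one, add_comm]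
    _ = r • (resolvent a r * Ring.inverse a) := by
        rw [← mul_assoc, ← add_mul, ← mul_add, sub_add_cancel, Algebra.algebraMap_eq_smul_one,
          mul_smul_one, smul_mul_assoc]

theorem IsUnit.sub_of_norm_inverse_mul_norm_lt {R : Type*} [NormedRing R]
    [HasSummableGeomSeries R] {u t : R} (hu : IsUnit u) (h : ‖Ring.inverse u‖ * ‖t‖ < 1) :
    IsUnit (u - t) := by
  have hfac : u - t = u * (1 - Ring.inverse u * t) := by
    rw [mul_sub, mul_one, ← mul_assoc, Ring.mul_inverse_cancel _ hu, one_mul]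
  rw [hfac]
  exact hu.mul (Units.oneSub _ ((norm_mul_le _ _).trans_lt h)).isUnit

theorem IsClosed.exists_bound_of_continuousOn_of_isBigO_one {E : Type*} [NormedAddCommGroup E]
    {f : ℂ → E} {s : Set ℂ} (hs : IsClosed s) (hf : ContinuousOn f s)
    (hbdd : f =O[cobounded ℂ] fun _ ↦ (1 : ℝ)) : ∃ K, ∀ z ∈ s, ‖f z‖ ≤ K := by
  obtain ⟨c, hc⟩ := hbdd.bound
  obtain ⟨R, -, hR⟩ := atTop_basis_Ioi.cobounded_of_norm.eventually_iff.mp hc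
  obtain ⟨C, hC⟩ := ((isCompact_closedBall 0 R).inter_left hs).exists_bound_of_continuousOn
    (hf.mono Set.inter_subset_left)
  refine ⟨max C c, fun z hz ↦ ?_⟩
  by_cases hzR : ‖z‖ ≤ R
  · exact (hC z ⟨hz, mem_closedBall_zero_iff.mpr hzR⟩).trans (le_max_left _ _)
  · simpa using (hR (not_le.mp hzR)).trans_eq (by simp) |>.trans (le_max_right C c)

section BanachAlgebra

variable {A : Type*} [NormedRing A] [NormedAlgebra ℂ A] [CompleteSpace A]

theorem continuousOn_resolvent (a : A) : ContinuousOn (resolvent a) (resolventSet ℂ a) :=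
  fun _ hz ↦ (spectrum.hasDerivAt_resolvent_const_left hz).continuousAt.continuousWithinAt

theorem exists_norm_resolvent_le {a : A} {s : Set ℂ} (hs : IsClosed s)
    (hsa : s ⊆ resolventSet ℂ a) : ∃ K, ∀ z ∈ s, ‖resolvent a z‖ ≤ K :=
  hs.exists_bound_of_continuousOn_of_isBigO_one ((continuousOn_resolvent a).mono hsa)
    ((spectrum.resolvent_tendsto_cobounded a).isBigO_one ℝ)

theorem exists_norm_smul_resolvent_le {a : A} {s : Set ℂ} (hs : IsClosed s)
    (hsa : s ⊆ resolventSet ℂ a) : ∃ K, ∀ z ∈ s, ‖z • resolvent a z‖ ≤ K := by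
  refine hs.exists_bound_of_continuousOn_of_isBigO_one
    (continuousOn_id.smul ((continuousOn_resolvent a).mono hsa)) ?_
  refine ((isBigO_refl id _).smul (spectrum.resolvent_isBigO_inv a)).trans
    (isBigO_of_le _ fun z ↦ ?_)
  simpa using mul_inv_le_one

end BanachAlgebra

section Matrix

variable {𝕜 n m : Type*} [Field 𝕜] [Fintype m] [DecidableEq m]

theorem mul_resolvent_mul_eq (B : Matrix n m 𝕜) (C : Matrix m n 𝕜) {D : Matrix m m 𝕜} {μ : 𝕜}
    (hD : IsUnit D) (hμ : μ ∈ resolventSet 𝕜 D) :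
    B * resolvent D μ * C = μ • (B * resolvent D μ * (D⁻¹ * C)) - B * D⁻¹ * C := by
  have hres := resolvent_add_ringInverse hD hμ
  rw [← nonsing_inv_eq_ringInverse] at hres
  conv_lhs => rw [eq_sub_of_add_eq hres]
  simp only [Matrix.mul_sub, Matrix.sub_mul, Matrix.mul_smul, Matrix.smul_mul, Matrix.mul_assoc]

variable [Fintype n] [DecidableEq n]

theorem Matrix.map_nonsing_inv {L : Type*} [Field L] (f : 𝕜 →+* L) (M : Matrix n n 𝕜) :
    (M⁻¹).map f = (M.map f)⁻¹ := by
  change _ = (f.mapMatrix M)⁻¹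
  rw [inv_def, inv_def, ← RingHom.map_adjugate, ← RingHom.map_det]
  ext
  simp

theorem isUnit_algebraMap_sub_fromBlocks_iff (A : Matrix n n 𝕜) (B : Matrix n m 𝕜)
    (C : Matrix m n 𝕜) (D : Matrix m m 𝕜) {τ z : 𝕜} (hτ : τ ≠ 0)
    (hD : τ * z ∈ resolventSet 𝕜 D) :
    IsUnit (algebraMap 𝕜 _ z - fromBlocks A B (τ⁻¹ • C) (τ⁻¹ • D)) ↔
      IsUnit (algebraMap 𝕜 _ z - A - B * resolvent D (τ * z) * C) := by
  have hblocks : algebraMap 𝕜 _ z - fromBlocks A B (τ⁻¹ • C) (τ⁻¹ • D) =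
      fromBlocks (algebraMap 𝕜 _ z - A) (-B) (-(τ⁻¹ • C))
        (τ⁻¹ • (algebraMap 𝕜 _ (τ * z) - D)) := by
    simp only [Algebra.algebraMap_eq_smul_one, ← fromBlocks_one, fromBlocks_smul, smul_sub,
      smul_smul, inv_mul_cancel_left₀ hτ]
    ext (i | i) (j | j) <;> simp
  let _ : Invertible (τ⁻¹ • (algebraMap 𝕜 (Matrix m m 𝕜) (τ * z) - D)) :=
    ⟨τ • resolvent D (τ * z),
      by rw [smul_mul_smul, mul_inv_cancel₀ hτ, one_smul]; exact Ring.inverse_mul_cancel _ hD,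
      by rw [smul_mul_smul, inv_mul_cancel₀ hτ, one_smul]; exact Ring.mul_inverse_cancel _ hD⟩
  rw [hblocks, isUnit_fromBlocks_iff_of_invertible₂₂]
  change IsUnit (_ - _ * (τ • resolvent D (τ * z)) * _ : Matrix n n 𝕜) ↔ _
  simp [smul_smul, hτ]

end Matrix

section ComplexMatrix

attribute [local instance] Matrix.linftyOpNormedAddCommGroup Matrix.linftyOpNormedRing
  Matrix.linftyOpNormedAlgebra

theorem exists_pos_forall_spectrum_fromBlocks_re_neg {n m : Type*} [Fintype n] [Fintype m]
    [DecidableEq n] [DecidableEq m] (A : Matrix n n ℂ) (B : Matrix n m ℂ) (C : Matrix m n ℂ)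
    (D : Matrix m m ℂ) (hD : ∀ z ∈ spectrum ℂ D, z.re < 0)
    (hA : ∀ z ∈ spectrum ℂ (A - B * D⁻¹ * C), z.re < 0) :
    ∃ τstar > (0 : ℝ), ∀ τ : ℝ, 0 < τ → τ < τstar →
      ∀ z ∈ spectrum ℂ (fromBlocks A B ((τ : ℂ)⁻¹ • C) ((τ : ℂ)⁻¹ • D)), z.re < 0 := by
  set A₀ := A - B * D⁻¹ * C with hA₀
  set S := {z : ℂ | 0 ≤ z.re}
  have hS : IsClosed S := isClosed_le continuous_const Complex.continuous_re
  have hSD : S ⊆ resolventSet ℂ D := fun z hz ↦ not_not.mp fun hzD ↦ (hD z hzD).not_ge hz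
  have hSA : S ⊆ resolventSet ℂ A₀ := fun z hz ↦ not_not.mp fun hzA ↦ (hA z hzA).not_ge hz
  have hDunit : IsUnit D := (spectrum.zero_notMem_iff ℂ).mp fun h ↦ by simpa using hD 0 h
  obtain ⟨K, hK⟩ := exists_norm_resolvent_le hS hSD
  obtain ⟨K₀, hK₀⟩ := exists_norm_smul_resolvent_le hS hSA
  set c := K₀ * (‖B‖ * K * ‖D⁻¹ * C‖)
  refine ⟨1 / (|c| + 1), by positivity, fun τ hτ hτc z hz ↦ ?_⟩
  by_contra! hre
  have hτz : (τ : ℂ) * z ∈ S := by simpa [S, Complex.mul_re] using mul_nonneg hτ.le hre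
  have hschur : algebraMap ℂ _ z - A - B * resolvent D (τ * z) * C =
      algebraMap ℂ _ z - A₀ - ((τ : ℂ) * z) • (B * resolvent D (τ * z) * (D⁻¹ * C)) := by
    rw [mul_resolvent_mul_eq B C hDunit (hSD hτz), hA₀]
    abel
  set X := B * resolvent D (τ * z) * (D⁻¹ * C)
  have hX : ‖X‖ ≤ ‖B‖ * K * ‖D⁻¹ * C‖ := by
    grw [linfty_opNorm_mul, linfty_opNorm_mul, hK _ hτz]
  refine hz ((isUnit_algebraMap_sub_fromBlocks_iff A B C D (mod_cast hτ.ne') (hSD hτz)).mpr ?_)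
  rw [hschur]
  refine (hSA hre).sub_of_norm_inverse_mul_norm_lt ?_
  calc ‖resolvent A₀ z‖ * ‖((τ : ℂ) * z) • X‖ = τ * (‖z • resolvent A₀ z‖ * ‖X‖) := by
        rw [norm_smul, norm_smul, norm_mul, Complex.norm_real, Real.norm_of_nonneg hτ.le]; ring
    _ ≤ τ * |c| := by
        gcongr
        exact (mul_le_mul (hK₀ z hre) hX (norm_nonneg _) ((norm_nonneg _).trans (hK₀ z hre))).trans
          (le_abs_self c)
    _ < 1 := by
        rw [lt_div_iff₀ (by positivity)] at hτc
        nlinarith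

end ComplexMatrix

theorem singular_perturbation_stability {n m : ℕ}
    (A11 : Matrix (Fin n) (Fin n) ℝ) (A12 : Matrix (Fin n) (Fin m) ℝ)
    (A21 : Matrix (Fin m) (Fin n) ℝ) (A22 : Matrix (Fin m) (Fin m) ℝ)
    (h22 : IsHurwitz A22) (h0 : IsHurwitz (A11 - A12 * A22⁻¹ * A21)) :
    ∃ τstar > (0 : ℝ), ∀ τ : ℝ, 0 < τ → τ < τstar →
      IsHurwitz (Matrix.fromBlocks A11 A12 (τ⁻¹ • A21) (τ⁻¹ • A22)) := by
  have hmul {a b c : ℕ} (P : Matrix (Fin a) (Fin b) ℝ) (Q : Matrix (Fin b) (Fin c) ℝ) :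
      (P * Q).map Complex.ofReal = P.map Complex.ofReal * Q.map Complex.ofReal :=
    Matrix.map_mul (f := Complex.ofRealHom)
  have hinv : (A22⁻¹).map Complex.ofReal = (A22.map Complex.ofReal)⁻¹ :=
    Matrix.map_nonsing_inv Complex.ofRealHom A22
  have hA₀ : (A11 - A12 * A22⁻¹ * A21).map Complex.ofReal = A11.map Complex.ofReal -
      A12.map Complex.ofReal * (A22.map Complex.ofReal)⁻¹ * A21.map Complex.ofReal := by
    rw [Matrix.map_sub _ Complex.ofReal_sub, hmul, hmul, hinv]
  obtain ⟨τstar, hτstar, h⟩ := exists_pos_forall_spectrum_fromBlocks_re_neg _ _ _ _ h22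
    (by simpa only [IsHurwitz, hA₀] using h0)
  refine ⟨τstar, hτstar, fun τ hτ hτs ↦ ?_⟩
  have hsmul {a b : ℕ} (P : Matrix (Fin a) (Fin b) ℝ) :
      (τ⁻¹ • P).map Complex.ofReal = (τ : ℂ)⁻¹ • P.map Complex.ofReal := by
    ext; simp
  simpa only [IsHurwitz, fromBlocks_map, hsmul] using h τ hτ hτs
end
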